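/- arXiv:2306.06878 — 3 statements merged into one kernel-verified Lean document; each statement's English description precedes it below -/
import Mathlib

section
/- Let V be a finite type and let E be a Fitch graph on V with no bidirectional edges, i.e., there is no pair x, y with both E x y and E y x. Then E is acyclic, i.e., the transitive closure of E is irreflexive. -/
/-- `IsFitchOn E S` : the digraph `E` is a Fitch graph on the vertex set `S`. -/
inductive IsFitchOn {V : Type*} (E : V → V → Prop) : Set V → Prop where
  | edgeless (S : Set V) (h : ∀ x ∈ S, ∀ y ∈ S, ¬ E x y) : IsFitchOn E S
  | join (A B : Set V) (hdisj : Disjoint A B) (hA : A.Nonempty) (hB : B.Nonempty)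
      (fA : IsFitchOn E A) (fB : IsFitchOn E B)
      (h : ∀ a ∈ A, ∀ b ∈ B, E a b ∧ E b a) : IsFitchOn E (A ∪ B)
  | dirJoin (A B : Set V) (hdisj : Disjoint A B) (hA : A.Nonempty) (hB : B.Nonempty)
      (hAedgeless : ∀ x ∈ A, ∀ y ∈ A, ¬ E x y) (fB : IsFitchOn E B)
      (h : ∀ a ∈ A, ∀ b ∈ B, E a b ∧ ¬ E b a) : IsFitchOn E (A ∪ B)

theorem fitch_aux {V : Type*} (E : V → V → Prop) {S : Set V} (hf : IsFitchOn E S)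
    (hnobi : ∀ x y : V, ¬ (E x y ∧ E y x)) :
    ∀ x, ¬ Relation.TransGen (fun a b => a ∈ S ∧ b ∈ S ∧ E a b) x x := by
  induction hf with
  | edgeless S h =>
    intro x hx
    cases hx with
    | single h' => exact h _ h'.1 _ h'.2.1 h'.2.2
    | tail h1 h2 => exact h _ h2.1 _ h2.2.1 h2.2.2
  | join A B hdisj hA hB fA fB h ihA ihB =>
    obtain ⟨a, ha⟩ := hA
    obtain ⟨b, hb⟩ := hB
    intro x _
    exact hnobi a b ⟨(h a ha b hb).1, (h a ha b hb).2⟩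
  | dirJoin A B hdisj hA hB hAe fB h ihB =>
    have hnoA : ∀ p q : V, (p ∈ A ∪ B ∧ q ∈ A ∪ B ∧ E p q) → q ∉ A := by
      rintro p q ⟨hp, _, hpq⟩ hqA
      cases hp with
      | inl hpA => exact hAe p hpA q hqA hpq
      | inr hpB => exact (h q hqA p hpB).2 hpq
    have key : ∀ x y, Relation.TransGen (fun a b => a ∈ A ∪ B ∧ b ∈ A ∪ B ∧ E a b) x y →
        x ∈ B → y ∈ B ∧ Relation.TransGen (fun a b => a ∈ B ∧ b ∈ B ∧ E a b) x y := by
      intro x y hxy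
      induction hxy with
      | single h' =>
        intro hxB
        rcases h'.2.1 with hA' | hB'
        · exact absurd hA' (hnoA _ _ h')
        · exact ⟨hB', .single ⟨hxB, hB', h'.2.2⟩⟩
      | tail h1 h2 ih =>
        intro hxB
        obtain ⟨hbB, tg⟩ := ih hxB
        rcases h2.2.1 with hA' | hB'
        · exact absurd hA' (hnoA _ _ h2)
        · exact ⟨hB', tg.tail ⟨hbB, hB', h2.2.2⟩⟩
    intro x hx
    have hxmem : x ∈ A ∪ B ∧ x ∉ A := by
      cases hx with
      | single h' => exact ⟨h'.2.1, hnoA _ _ h'⟩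
      | tail h1 h2 => exact ⟨h2.2.1, hnoA _ _ h2⟩
    have hxB : x ∈ B := by
      rcases hxmem.1 with hA' | hB'
      · exact absurd hA' hxmem.2
      · exact hB'
    exact ihB x (key x x hx hxB).2

/-- A Fitch graph without bidirectional edges is a DAG. -/
theorem fitch_no_bidirectional_acyclic {V : Type*} [Fintype V]
    (E : V → V → Prop) (hirr : Irreflexive E) (hE : IsFitchOn E Set.univ)
    (hnobi : ∀ x y : V, ¬ (E x y ∧ E y x)) :
    Irreflexive (Relation.TransGen E) := by
  intro x hx
  exact fitch_aux E hE hnobi x (Relation.TransGen.mono (fun a b h => ⟨trivial, trivial, h⟩) x x hx)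
end

section
/- Sufficiency of rule (S2): let 𝓔 = (E0, E1, E→) be a partial tuple on a finite vertex set V such that the graph G1 = (V, E0 ∪ E→) is disconnected (V has more than one connected component with respect to the equivalence relation generated by E0 ∪ E→), and 𝓔[C] is Fitch-satisfiable for every connected component C of G1. Then 𝓔 is Fitch-satisfiable. -/
/-- A (partial) tuple of relations: all irreflexive, the first two symmetric,
the third antisymmetric. -/
def IsPartialTuple {V : Type*} (E0 E1 Er : V → V → Prop) : Prop :=
  Irreflexive E0 ∧ Irreflexive E1 ∧ Irreflexive Er ∧
    Symmetric E0 ∧ Symmetric E1 ∧ ∀ x y : V, Er x y → ¬ Er y x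

/-- A tuple of relations is full if the relations are pairwise disjoint and every
pair of distinct vertices is in one of them (in some direction). -/
def IsFullTriple {V : Type*} (F0 F1 Fr : V → V → Prop) : Prop :=
  (∀ x y : V, ¬ (F0 x y ∧ F1 x y)) ∧ (∀ x y : V, ¬ (F0 x y ∧ Fr x y)) ∧
    (∀ x y : V, ¬ (F1 x y ∧ Fr x y)) ∧
    ∀ x y : V, x ≠ y → F0 x y ∨ F1 x y ∨ Fr x y ∨ Fr y x

/-- The partial tuple `(E0, E1, Er)` is Fitch-satisfiable: some full tuple extending it
has `E1* ∪ E→*` a Fitch graph on the whole vertex set. -/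
def FitchSat {V : Type*} (E0 E1 Er : V → V → Prop) : Prop :=
  ∃ F0 F1 Fr : V → V → Prop,
    IsPartialTuple F0 F1 Fr ∧ IsFullTriple F0 F1 Fr ∧
    (∀ x y, E0 x y → F0 x y) ∧ (∀ x y, E1 x y → F1 x y) ∧ (∀ x y, Er x y → Fr x y) ∧
    IsFitchOn (fun x y => F1 x y ∨ Fr x y) Set.univ

/-- Restriction of a relation on `V` to a subset `W ⊆ V`. -/
def restrictRel {V : Type*} (E : V → V → Prop) (W : Set V) : W → W → Prop :=
  fun x y => E x.1 y.1

/-- The edge relation of the graph `G1 = (V, E0 ∪ E→)`. -/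
def G1Rel {V : Type*} (E0 Er : V → V → Prop) : V → V → Prop :=
  fun x y => E0 x y ∨ Er x y

/-- The connected component of `v` in `G1` (weak connectivity: the equivalence
relation generated by the edge relation). -/
def ccG1 {V : Type*} (E0 Er : V → V → Prop) (v : V) : Set V :=
  {y | Relation.EqvGen (G1Rel E0 Er) v y}

lemma isFitchOn_image {V : Type*} {S : Set V} (E : V → V → Prop) (E' : S → S → Prop)
    (hE : ∀ a b : S, E' a b ↔ E a b) {T : Set S} (h : IsFitchOn E' T) :
    IsFitchOn E (Subtype.val '' T) := by
  induction h with
  | edgeless T h =>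
      refine .edgeless _ ?_
      rintro x ⟨a, ha, rfl⟩ y ⟨b, hb, rfl⟩ hab
      exact h a ha b hb ((hE a b).mpr hab)
  | join A B hd hA hB fA fB hj ihA ihB =>
      rw [Set.image_union]
      refine .join _ _ (Set.disjoint_image_of_injective Subtype.val_injective hd)
        (hA.image _) (hB.image _) ihA ihB ?_
      rintro _ ⟨a, ha, rfl⟩ _ ⟨b, hb, rfl⟩
      exact ⟨(hE a b).mp (hj a ha b hb).1, (hE b a).mp (hj a ha b hb).2⟩
  | dirJoin A B hd hA hB hAe fB hj ihB =>
      rw [Set.image_union]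
      refine .dirJoin _ _ (Set.disjoint_image_of_injective Subtype.val_injective hd)
        (hA.image _) (hB.image _) ?_ ihB ?_
      · rintro _ ⟨a, ha, rfl⟩ _ ⟨b, hb, rfl⟩ hab
        exact hAe a ha b hb ((hE a b).mpr hab)
      · rintro _ ⟨a, ha, rfl⟩ _ ⟨b, hb, rfl⟩
        exact ⟨(hE a b).mp (hj a ha b hb).1, fun hba => (hj a ha b hb).2 ((hE b a).mpr hba)⟩

lemma isFitchOn_of_partition {V : Type*} [Fintype V] (E : V → V → Prop)
    (P : V → V → Prop) (hEq : Equivalence P)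
    (hclass : ∀ x : V, IsFitchOn E {y | P x y})
    (hcross : ∀ x y : V, ¬ P x y → E x y) :
    IsFitchOn E Set.univ := by
  classical
  suffices h : ∀ n (S : Set V), S.ncard ≤ n →
      (∀ x ∈ S, {y | P x y} ⊆ S) → IsFitchOn E S by
    exact h (Set.univ : Set V).ncard Set.univ le_rfl (fun x _ => Set.subset_univ _)
  intro n
  induction n with
  | zero =>
      intro S hS _
      have : S = ∅ := (Set.ncard_eq_zero S.toFinite).mp (Nat.le_zero.mp hS)
      subst this
      exact .edgeless _ (by simp)
  | succ n ih =>
      intro S hcard hcl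
      rcases S.eq_empty_or_nonempty with rfl | ⟨x, hx⟩
      · exact .edgeless _ (by simp)
      · set A := {y | P x y} with hAdef
        set B := S \ A with hBdef
        have hAS : A ⊆ S := hcl x hx
        have hxA : x ∈ A := hEq.refl x
        rcases B.eq_empty_or_nonempty with hB | hBne
        · have hSA : S = A := subset_antisymm (Set.diff_eq_empty.mp hB) hAS
          rw [hSA]
          exact hclass x
        · have hBcl : ∀ z ∈ B, {y | P z y} ⊆ B := by
            intro z hz y hy
            refine ⟨hcl z hz.1 hy, fun hyA => hz.2 (hEq.trans hyA (hEq.symm hy))⟩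
          have hlt : B.ncard < S.ncard :=
            Set.ncard_lt_ncard ⟨Set.diff_subset, fun h => (h hx).2 hxA⟩ S.toFinite
          have fB := ih B (by omega) hBcl
          have hS : S = A ∪ B := (Set.union_diff_cancel hAS).symm
          rw [hS]
          refine .join A B Set.disjoint_sdiff_right ⟨x, hxA⟩ hBne (hclass x) fB ?_
          intro a ha b hb
          have hna : ¬ P a b := fun hab => hb.2 (hEq.trans ha hab)
          exact ⟨hcross a b hna, hcross b a fun hba => hna (hEq.symm hba)⟩

def glueRel {V : Type*} (cc : V → Set V) (rep : V → V)
    (G : ∀ v : V, cc v → cc v → Prop) (x y : V) : Prop :=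
  ∃ (hx : x ∈ cc (rep x)) (hy : y ∈ cc (rep x)), G (rep x) ⟨x, hx⟩ ⟨y, hy⟩

lemma glueRel_iff {V : Type*} {cc : V → Set V} {rep : V → V}
    {G : ∀ v : V, cc v → cc v → Prop} {x y v : V} (e : rep x = v)
    (hx : x ∈ cc v) (hy : y ∈ cc v) :
    glueRel cc rep G x y ↔ G v ⟨x, hx⟩ ⟨y, hy⟩ := by
  subst e
  exact ⟨fun ⟨_, _, h⟩ => h, fun h => ⟨hx, hy, h⟩⟩

/-- Sufficiency of rule (S2): if `G1 = (V, E0 ∪ E→)` is disconnected and the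
restriction of the partial tuple to each connected component of `G1` is
Fitch-satisfiable, then the partial tuple is Fitch-satisfiable. -/
theorem fitchSat_of_S2 {V : Type*} [Fintype V] (E0 E1 Er : V → V → Prop)
    (h : IsPartialTuple E0 E1 Er)
    (hdisc : ∃ x y : V, ¬ Relation.EqvGen (G1Rel E0 Er) x y)
    (hcomp : ∀ v : V,
      FitchSat (restrictRel E0 (ccG1 E0 Er v)) (restrictRel E1 (ccG1 E0 Er v))
        (restrictRel Er (ccG1 E0 Er v))) :
    FitchSat E0 E1 Er := by
  classical
  set R := G1Rel E0 Er with hRdef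
  have hEqv : Equivalence (Relation.EqvGen R) := Relation.EqvGen.is_equivalence R
  let s : Setoid V := ⟨Relation.EqvGen R, hEqv⟩
  let rep : V → V := fun x => (Quotient.mk s x).out
  have hrep : ∀ x, Relation.EqvGen R (rep x) x := by
    intro x
    exact Quotient.exact ((Quotient.mk s x).out_eq)
  have hrepeq : ∀ {x y : V}, Relation.EqvGen R x y → rep x = rep y := by
    intro x y hxy
    exact congrArg Quotient.out (Quotient.sound (hxy : s.r x y))
  have hmem : ∀ {x y : V}, y ∈ ccG1 E0 Er x ↔ Relation.EqvGen R x y := fun {x y} => Iff.rfl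
  have hself : ∀ x, x ∈ ccG1 E0 Er (rep x) := fun x => hrep x
  have hsame : ∀ {x y : V}, y ∈ ccG1 E0 Er (rep x) → Relation.EqvGen R x y :=
    fun {x y} hy => hEqv.trans (hEqv.symm (hrep x)) hy
  have hrepfix : ∀ {x y : V}, y ∈ ccG1 E0 Er (rep x) → rep y = rep x :=
    fun {x y} hy => (hrepeq (hsame hy)).symm
  have hcomp' : ∀ v : V, ∃ F0 F1 Fr : ccG1 E0 Er v → ccG1 E0 Er v → Prop,
      IsPartialTuple F0 F1 Fr ∧ IsFullTriple F0 F1 Fr ∧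
      (∀ x y, restrictRel E0 (ccG1 E0 Er v) x y → F0 x y) ∧
      (∀ x y, restrictRel E1 (ccG1 E0 Er v) x y → F1 x y) ∧
      (∀ x y, restrictRel Er (ccG1 E0 Er v) x y → Fr x y) ∧
      IsFitchOn (fun x y => F1 x y ∨ Fr x y) Set.univ := hcomp
  choose G0 G1f Grf hP using hcomp'
  refine ⟨glueRel (ccG1 E0 Er) rep G0,
    fun x y => glueRel (ccG1 E0 Er) rep G1f x y ∨ ¬ Relation.EqvGen R x y,
    glueRel (ccG1 E0 Er) rep Grf, ⟨?_, ?_, ?_, ?_, ?_, ?_⟩, ⟨?_, ?_, ?_, ?_⟩,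
    ?_, ?_, ?_, ?_⟩
  · -- Irreflexive F0
    rintro x ⟨hx, hy, hg⟩
    exact (hP (rep x)).1.1 _ hg
  · -- Irreflexive F1
    rintro x (⟨hx, hy, hg⟩ | hns)
    · exact (hP (rep x)).1.2.1 _ hg
    · exact hns (hEqv.refl x)
  · -- Irreflexive Fr
    rintro x ⟨hx, hy, hg⟩
    exact (hP (rep x)).1.2.2.1 _ hg
  · -- Symmetric F0
    rintro x y ⟨hx, hy, hg⟩
    rw [glueRel_iff (hrepfix hy) hy hx]
    exact (hP (rep x)).1.2.2.2.1 hg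
  · -- Symmetric F1
    rintro x y (⟨hx, hy, hg⟩ | hns)
    · left
      rw [glueRel_iff (hrepfix hy) hy hx]
      exact (hP (rep x)).1.2.2.2.2.1 hg
    · exact Or.inr fun hyx => hns (hEqv.symm hyx)
  · -- antisymmetric Fr
    rintro x y ⟨hx, hy, hg⟩ hcon
    have hg' := (glueRel_iff (hrepfix hy) hy hx).mp hcon
    exact (hP (rep x)).1.2.2.2.2.2 _ _ hg hg'
  · -- F0 F1 disjoint
    rintro x y ⟨⟨hx, hy, hg0⟩, (⟨hx', hy', hg1⟩ | hns)⟩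
    · exact (hP (rep x)).2.1.1 _ _ ⟨hg0, hg1⟩
    · exact hns (hsame hy)
  · -- F0 Fr disjoint
    rintro x y ⟨⟨hx, hy, hg0⟩, ⟨hx', hy', hgr⟩⟩
    exact (hP (rep x)).2.1.2.1 _ _ ⟨hg0, hgr⟩
  · -- F1 Fr disjoint
    rintro x y ⟨(⟨hx, hy, hg1⟩ | hns), ⟨hx', hy', hgr⟩⟩
    · exact (hP (rep x)).2.1.2.2.1 _ _ ⟨hg1, hgr⟩
    · exact hns (hsame hy')
  · -- totality
    intro x y hne
    by_cases hs : Relation.EqvGen R x y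
    · have hx : x ∈ ccG1 E0 Er (rep x) := hself x
      have hy : y ∈ ccG1 E0 Er (rep x) := hEqv.trans (hrep x) hs
      have hsub : (⟨x, hx⟩ : ccG1 E0 Er (rep x)) ≠ ⟨y, hy⟩ :=
        fun hc => hne (congrArg Subtype.val hc)
      rcases (hP (rep x)).2.1.2.2.2 _ _ hsub with hg | hg | hg | hg
      · exact Or.inl ⟨hx, hy, hg⟩
      · exact Or.inr (Or.inl (Or.inl ⟨hx, hy, hg⟩))
      · exact Or.inr (Or.inr (Or.inl ⟨hx, hy, hg⟩))
      · refine Or.inr (Or.inr (Or.inr ?_))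
        rw [glueRel_iff (hrepfix hy) hy hx]
        exact hg
    · exact Or.inr (Or.inl (Or.inr hs))
  · -- E0 extension
    intro x y h0
    have hy : y ∈ ccG1 E0 Er (rep x) :=
      hEqv.trans (hrep x) (Relation.EqvGen.rel _ _ (Or.inl h0))
    exact ⟨hself x, hy, (hP (rep x)).2.2.1 ⟨x, hself x⟩ ⟨y, hy⟩ h0⟩
  · -- E1 extension
    intro x y h1
    by_cases hs : Relation.EqvGen R x y
    · have hy : y ∈ ccG1 E0 Er (rep x) := hEqv.trans (hrep x) hs
      exact Or.inl ⟨hself x, hy, (hP (rep x)).2.2.2.1 ⟨x, hself x⟩ ⟨y, hy⟩ h1⟩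
    · exact Or.inr hs
  · -- Er extension
    intro x y hr
    have hy : y ∈ ccG1 E0 Er (rep x) :=
      hEqv.trans (hrep x) (Relation.EqvGen.rel _ _ (Or.inr hr))
    exact ⟨hself x, hy, (hP (rep x)).2.2.2.2.1 ⟨x, hself x⟩ ⟨y, hy⟩ hr⟩
  · -- Fitch graph on univ
    apply isFitchOn_of_partition _ (Relation.EqvGen R) hEqv
    · intro x
      have hcc : {y | Relation.EqvGen R x y} = ccG1 E0 Er (rep x) :=
        Set.ext fun y => ⟨fun hxy => hEqv.trans (hrep x) hxy, fun hy => hsame hy⟩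
      rw [hcc, ← Subtype.coe_image_univ (ccG1 E0 Er (rep x))]
      apply isFitchOn_image _ _ ?_ ((hP (rep x)).2.2.2.2.2)
      intro a b
      have ea : rep a.1 = rep x := hrepfix a.2
      constructor
      · rintro (hg | hg)
        · exact Or.inl (Or.inl ((glueRel_iff ea a.2 b.2).mpr hg))
        · exact Or.inr ((glueRel_iff ea a.2 b.2).mpr hg)
      · rintro ((hg | hns) | hg)
        · exact Or.inl ((glueRel_iff ea a.2 b.2).mp hg)
        · exact absurd (hEqv.trans (hEqv.symm (hsame a.2)) (hsame b.2)) hns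
        · exact Or.inr ((glueRel_iff ea a.2 b.2).mp hg)
    · intro x y hns
      exact Or.inl (Or.inr hns)
end

section
/- Correctness of the reduction from Maximum Acyclic Subgraph to Fitch completion: let V be a finite type with n = |V|, let E be an irreflexive relation on V (a digraph), and let k be a natural number. For an irreflexive relation F on V define f(F) to be the number of ordered pairs (x, y) of distinct vertices such that F x y holds, F y x does not hold, and E x y holds, minus n² times the number of unordered pairs {x, y} such that both F x y and F y x hold. Then there exists a Fitch graph F on V with f(F) ≥ k if and only if there exists a subrelation E' ⊆ E that is acyclic and contains at least k edges. -/
/-- The objective value of a candidate Fitch graph `F` for the instance of the Fitch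
completion problem obtained from a Maximum Acyclic Subgraph instance with digraph `E`:
each unidirectional `F`-edge that is an `E`-edge contributes `1`, each unidirectional
`F`-edge not in `E` and each non-adjacent pair contributes `0`, and each bidirectional
`F`-edge (an unordered pair) contributes `-|V|²`. -/
noncomputable def fcScore (V : Type*) [Fintype V] (E F : V → V → Prop) : ℤ :=
  (Set.ncard {p : V × V | F p.1 p.2 ∧ ¬ F p.2 p.1 ∧ E p.1 p.2} : ℤ) -
    (Fintype.card V : ℤ) ^ 2 *
      (Set.ncard {s : Sym2 V | ∃ x y : V, s = s(x, y) ∧ F x y ∧ F y x} : ℤ)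

/-- An asymmetric Fitch graph is acyclic (restricted to its vertex set). -/
lemma fitch_acyclic {V : Type*} {F : V → V → Prop} {S : Set V}
    (hf : IsFitchOn F S) :
    (∀ x ∈ S, ∀ y ∈ S, F x y → ¬ F y x) →
    ∀ x, ¬ Relation.TransGen (fun a b => a ∈ S ∧ b ∈ S ∧ F a b) x x := by
  induction hf with
  | edgeless S h =>
    intro _ x hx
    cases hx with
    | single h' => exact h x h'.1 x h'.2.1 h'.2.2
    | tail _ h' => exact h _ h'.1 x h'.2.1 h'.2.2
  | join A B hdisj hA hB fA fB h ihA ihB =>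
    intro hasym
    obtain ⟨a, ha⟩ := hA
    obtain ⟨b, hb⟩ := hB
    exact absurd (h a ha b hb).2
      (hasym a (Or.inl ha) b (Or.inr hb) (h a ha b hb).1)
  | dirJoin A B hdisj hA hB hAe fB h ih =>
    intro hasym x hx
    have key : ∀ u v, Relation.TransGen
        (fun a b => a ∈ A ∪ B ∧ b ∈ A ∪ B ∧ F a b) u v →
        v ∈ B ∧ (u ∈ B → Relation.TransGen
          (fun a b => a ∈ B ∧ b ∈ B ∧ F a b) u v) := by
      intro u v huv
      induction huv with
      | @single v h' =>
        rcases h' with ⟨hu, hv, hF⟩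
        have hvB : v ∈ B := by
          rcases hv with hv | hv
          · rcases hu with hu | hu
            · exact absurd hF (hAe _ hu _ hv)
            · exact absurd hF (h _ hv _ hu).2
          · exact hv
        exact ⟨hvB, fun huB => Relation.TransGen.single ⟨huB, hvB, hF⟩⟩
      | @tail w z _ h' ih' =>
        rcases h' with ⟨hy, hz, hF⟩
        have hzB : z ∈ B := by
          rcases hz with hz | hz
          · exact absurd hF (h _ hz _ ih'.1).2
          · exact hz
        exact ⟨hzB, fun huB =>
          (ih'.2 huB).tail ⟨ih'.1, hzB, hF⟩⟩
    have hxB := (key x x hx).1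
    have hasymB : ∀ a ∈ B, ∀ b ∈ B, F a b → ¬ F b a := fun a ha b hb =>
      hasym a (Or.inr ha) b (Or.inr hb)
    exact ih hasymB x ((key x x hx).2 hxB)

/-- Strict total orders are Fitch graphs on every set. -/
lemma fitch_of_order {V : Type*} [Fintype V] {F : V → V → Prop}
    (hirr : Irreflexive F) (htrans : Transitive F)
    (htot : ∀ x y : V, x ≠ y → F x y ∨ F y x) :
    ∀ S : Set V, IsFitchOn F S := by
  haveI : IsTrans V F := ⟨@htrans⟩
  haveI : IsIrrefl V F := ⟨hirr⟩
  have hwf : WellFounded F := Finite.wellFounded_of_trans_of_irrefl F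
  suffices H : ∀ n (S : Set V), S.ncard = n → IsFitchOn F S from
    fun S => H _ S rfl
  intro n
  induction n using Nat.strong_induction_on with
  | _ n ih =>
  intro S hn
  rcases S.eq_empty_or_nonempty with rfl | hS
  · exact IsFitchOn.edgeless ∅ (by simp)
  obtain ⟨a, haS, hmin⟩ := hwf.has_min S hS
  rcases (S \ {a}).eq_empty_or_nonempty with hB | hB
  · have hSa : S = {a} := by
      apply Set.eq_singleton_iff_unique_mem.mpr
      refine ⟨haS, fun x hx => ?_⟩
      by_contra hne
      exact (Set.eq_empty_iff_forall_notMem.mp hB x) ⟨hx, hne⟩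
    subst hSa
    refine IsFitchOn.edgeless {a} fun x hx y hy hF => hirr a ?_
    rw [Set.mem_singleton_iff] at hx hy
    rw [hx, hy] at hF
    exact hF
  · have hdisj : Disjoint {a} (S \ {a}) := by simp
    have hcard : (S \ {a}).ncard < n := hn ▸ Set.ncard_diff_singleton_lt_of_mem haS
    have fB : IsFitchOn F (S \ {a}) := ih _ hcard _ rfl
    have hstep : ∀ a' ∈ ({a} : Set V), ∀ b ∈ S \ {a}, F a' b ∧ ¬ F b a' := by
      intro a' ha' b hb
      rw [Set.mem_singleton_iff] at ha'
      rw [ha']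
      have hnFba : ¬ F b a := hmin b hb.1
      rcases htot a b (fun he => hb.2 he.symm) with hab | hba
      · exact ⟨hab, hnFba⟩
      · exact absurd hba hnFba
    have := IsFitchOn.dirJoin {a} (S \ {a}) hdisj ⟨a, rfl⟩ hB
      (fun x hx y hy hF => hirr a (by
        rw [Set.mem_singleton_iff] at hx hy; rw [hx, hy] at hF; exact hF))
      fB hstep
    rwa [Set.singleton_union, Set.insert_diff_singleton,
      Set.insert_eq_self.mpr haS] at this

/-- Correctness of the reduction from Maximum Acyclic Subgraph to Fitch completion:
there is a Fitch graph `F` on `V` of score at least `k` iff `E` has an acyclic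
subrelation with at least `k` edges. -/
theorem fitchCompletion_reduction {V : Type*} [Fintype V]
    (E : V → V → Prop) (hirr : Irreflexive E) (k : ℕ) :
    (∃ F : V → V → Prop, Irreflexive F ∧ IsFitchOn F Set.univ ∧
      (k : ℤ) ≤ fcScore V E F) ↔
    (∃ E' : V → V → Prop, (∀ x y : V, E' x y → E x y) ∧
      Irreflexive (Relation.TransGen E') ∧
      k ≤ Set.ncard {p : V × V | E' p.1 p.2}) := by
  constructor
  · rintro ⟨F, hFirr, hFitch, hscore⟩
    set S1 := {p : V × V | F p.1 p.2 ∧ ¬ F p.2 p.1 ∧ E p.1 p.2} with hS1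
    set S2 := {s : Sym2 V | ∃ x y : V, s = s(x, y) ∧ F x y ∧ F y x} with hS2
    -- First: F is asymmetric
    have hasym : ∀ x y : V, F x y → ¬ F y x := by
      by_contra hbi
      push_neg at hbi
      obtain ⟨x, y, hxy, hyx⟩ := hbi
      have hne : x ≠ y := fun he => hFirr x (he ▸ hxy)
      have h2 : 1 ≤ S2.ncard := by
        have : s(x, y) ∈ S2 := ⟨x, y, rfl, hxy, hyx⟩
        have hpos : 0 < S2.ncard :=
          (Set.ncard_pos S2.toFinite).mpr ⟨_, this⟩
        omega
      have h1 : S1.ncard < (Fintype.card V) ^ 2 := by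
        have hss : S1 ⊂ Set.univ := by
          refine Set.ssubset_univ_iff.mpr ?_
          intro he
          have : (x, x) ∈ S1 := he ▸ Set.mem_univ _
          exact hFirr x this.1
        have := Set.ncard_lt_ncard hss Set.finite_univ
        rwa [Set.ncard_univ, Nat.card_eq_fintype_card, Fintype.card_prod,
          ← sq] at this
      have hb : (Fintype.card V : ℤ) ^ 2 * 1 ≤
          (Fintype.card V : ℤ) ^ 2 * (S2.ncard : ℤ) := by
        apply mul_le_mul_of_nonneg_left (by exact_mod_cast h2) (by positivity)
      have hk0 : (0 : ℤ) ≤ (k : ℤ) := Int.ofNat_nonneg k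
      have h1' : (S1.ncard : ℤ) < (Fintype.card V : ℤ) ^ 2 := by
        exact_mod_cast h1
      unfold fcScore at hscore
      rw [← hS1, ← hS2] at hscore
      linarith
    refine ⟨fun x y => F x y ∧ E x y, fun x y h => h.2, ?_, ?_⟩
    · intro x hx
      have : Relation.TransGen
          (fun a b => a ∈ (Set.univ : Set V) ∧ b ∈ Set.univ ∧ F a b) x x :=
        Relation.TransGen.mono (fun a b hab => ⟨trivial, trivial, hab.1⟩) _ _ hx
      exact fitch_acyclic hFitch (fun x _ y _ => hasym x y) x this
    · have hS2e : S2 = ∅ := by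
        ext s
        simp only [hS2, Set.mem_setOf_eq, Set.mem_empty_iff_false, iff_false]
        rintro ⟨x, y, _, hxy, hyx⟩
        exact hasym x y hxy hyx
      have heq : {p : V × V | F p.1 p.2 ∧ E p.1 p.2} = S1 := by
        ext p
        simp only [hS1, Set.mem_setOf_eq]
        exact ⟨fun h => ⟨h.1, hasym _ _ h.1, h.2⟩, fun h => ⟨h.1, h.2.2⟩⟩
      unfold fcScore at hscore
      rw [← hS1, ← hS2, hS2e] at hscore
      simp only [Set.ncard_empty, Nat.cast_zero, mul_zero, sub_zero] at hscore
      rw [heq]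
      exact_mod_cast hscore
  · rintro ⟨E', hsub, hacyc, hcard⟩
    set r := Relation.ReflTransGen E' with hr
    haveI : IsRefl V r := ⟨fun _ => Relation.ReflTransGen.refl⟩
    haveI : IsTrans V r := ⟨fun _ _ _ => Relation.ReflTransGen.trans⟩
    haveI : IsAntisymm V r := ⟨by
      intro a b hab hba
      rcases Relation.reflTransGen_iff_eq_or_transGen.mp hab with he | hab'
      · exact he.symm
      rcases Relation.reflTransGen_iff_eq_or_transGen.mp hba with he | hba'
      · exact he
      exact absurd (hab'.trans hba') (hacyc a)⟩
    haveI : IsPartialOrder V r := {}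
    obtain ⟨s, hlin, hrs⟩ := extend_partialOrder r
    haveI := hlin
    set F : V → V → Prop := fun x y => s x y ∧ x ≠ y with hF
    have hFasym : ∀ x y : V, F x y → ¬ F y x := by
      rintro x y ⟨hxy, hne⟩ ⟨hyx, _⟩
      exact hne (antisymm_of s hxy hyx)
    have hFirr : Irreflexive F := fun x h => h.2 rfl
    have hFtrans : Transitive F := by
      rintro x y z ⟨hxy, hnexy⟩ ⟨hyz, _⟩
      refine ⟨trans_of s hxy hyz, fun he => ?_⟩
      exact hnexy (antisymm_of s hxy (he ▸ hyz))
    have hFtot : ∀ x y : V, x ≠ y → F x y ∨ F y x := by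
      intro x y hne
      rcases total_of s x y with h | h
      · exact Or.inl ⟨h, hne⟩
      · exact Or.inr ⟨h, hne.symm⟩
    have hE'F : ∀ x y, E' x y → F x y := by
      intro x y h
      refine ⟨hrs x y (Relation.ReflTransGen.single h), ?_⟩
      rintro rfl
      exact hacyc x (Relation.TransGen.single h)
    refine ⟨F, hFirr, fitch_of_order hFirr hFtrans hFtot Set.univ, ?_⟩
    have hS2e : {t : Sym2 V | ∃ x y : V, t = s(x, y) ∧ F x y ∧ F y x} = ∅ := by
      ext t
      simp only [Set.mem_setOf_eq, Set.mem_empty_iff_false, iff_false]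
      rintro ⟨x, y, _, hxy, hyx⟩
      exact hFasym x y hxy hyx
    have hsubset : {p : V × V | E' p.1 p.2} ⊆
        {p : V × V | F p.1 p.2 ∧ ¬ F p.2 p.1 ∧ E p.1 p.2} := by
      rintro ⟨x, y⟩ h
      exact ⟨hE'F x y h, hFasym x y (hE'F x y h), hsub x y h⟩
    have hle := Set.ncard_le_ncard hsubset (Set.toFinite _)
    unfold fcScore
    rw [hS2e]
    simp only [Set.ncard_empty, Nat.cast_zero, mul_zero, sub_zero]
    exact_mod_cast le_trans hcard hle
end
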